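/- Let (X_n) be the simple symmetric nearest-neighbor random walk on ℤ. Let q_l = P_0(X_1 ≠ 0, …, X_{l-1} ≠ 0, X_l = 0) be the first-return probabilities. Then for any n ≥ 1 and any x with P_0(X_n = x) > 0, the expected number of distinct sites visited by the walk conditioned on X_n = x satisfies E_{0,x}^{(n)}(|X_{[0,n]}|) = n + 1 − Σ_{l=1}^{n} (n−l+1) q_l · p_{n−l}(x)/p_n(x), where p_m(x) = P_0(X_m = x). -/

import Mathlib

open Finset

/-- A ±1 step encoded by a Boolean. -/
def srwStep (b : Bool) : ℤ := if b then 1 else -1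

/-- Position of the simple random walk after `k` steps, for the step sequence `σ`. -/
def srwPos (n : ℕ) (σ : Fin n → Bool) (k : ℕ) : ℤ :=
  ∑ i ∈ Finset.univ.filter (fun i : Fin n => (i : ℕ) < k), srwStep (σ i)

/-- Number of `n`-step paths of the simple random walk ending at `x`. -/
def srwEndCount (n : ℕ) (x : ℤ) : ℕ :=
  (Finset.univ.filter (fun σ : Fin n → Bool => srwPos n σ n = x)).card

/-- `p_n(x) = P₀(X_n = x)` for the simple random walk on `ℤ`. -/
noncomputable def srwProb (n : ℕ) (x : ℤ) : ℝ := (srwEndCount n x : ℝ) / 2 ^ n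

open Classical in
/-- `q_l = P₀(X₁ ≠ 0, …, X_{l-1} ≠ 0, X_l = 0)`: first-return probability. -/
noncomputable def srwFirstReturn (l : ℕ) : ℝ :=
  ((Finset.univ.filter (fun σ : Fin l → Bool =>
      (∀ j ∈ Finset.Ioo 0 l, srwPos l σ j ≠ 0) ∧ srwPos l σ l = 0)).card : ℝ) / 2 ^ l

/-- `|X_{[0,n]}|`: number of distinct sites visited up to time `n`. -/
def srwRangeCard (n : ℕ) (σ : Fin n → Bool) : ℕ :=
  ((Finset.range (n + 1)).image (srwPos n σ)).card

namespace SRW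
variable {n : ℕ}

def seg (n : ℕ) (σ : Fin n → Bool) (a b : ℕ) : ℤ :=
  ∑ i ∈ univ.filter (fun i : Fin n => a ≤ (i:ℕ) ∧ (i:ℕ) < b), srwStep (σ i)

lemma pos_split (σ : Fin n → Bool) {a b : ℕ} (hab : a ≤ b) :
    srwPos n σ b = srwPos n σ a + seg n σ a b := by
  unfold srwPos seg
  rw [← Finset.sum_filter_add_sum_filter_not
      (univ.filter fun i : Fin n => (i:ℕ) < b) (fun i => (i:ℕ) < a)]
  rw [Finset.filter_filter, Finset.filter_filter]
  congr 1
  · apply Finset.sum_congr _ (fun _ _ => rfl)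
    apply Finset.filter_congr; intro i _; simp; omega
  · apply Finset.sum_congr _ (fun _ _ => rfl)
    apply Finset.filter_congr; intro i _; simp; omega

section split

def fwd1 (k l : ℕ) (hl : 1 ≤ l) (hlk : l ≤ k) (hkn : k ≤ n) (σ : Fin n → Bool) :
    Fin l → Bool :=
  fun t => σ ⟨k - 1 - (t:ℕ), by have := t.isLt; omega⟩

def fwd2 (k l : ℕ) (hl : 1 ≤ l) (hlk : l ≤ k) (hkn : k ≤ n) (σ : Fin n → Bool) :
    Fin (n - l) → Bool :=
  fun j => if (j:ℕ) < k - l then σ ⟨(j:ℕ), by have := j.isLt; omega⟩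
           else σ ⟨(j:ℕ) + l, by have := j.isLt; omega⟩

def bwd (k l : ℕ) (hl : 1 ≤ l) (hlk : l ≤ k) (hkn : k ≤ n)
    (τ : Fin l → Bool) (ρ : Fin (n - l) → Bool) : Fin n → Bool :=
  fun i => if h1 : (i:ℕ) < k - l then ρ ⟨(i:ℕ), by omega⟩
           else if h2 : (i:ℕ) < k then τ ⟨k - 1 - (i:ℕ), by omega⟩
           else ρ ⟨(i:ℕ) - l, by have := i.isLt; omega⟩

variable (k l : ℕ) (hl : 1 ≤ l) (hlk : l ≤ k) (hkn : k ≤ n)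

lemma fwd2_eq (σ : Fin n → Bool) (j : Fin (n - l)) (i : Fin n)
    (h : ((j:ℕ) < k - l ∧ (i:ℕ) = (j:ℕ)) ∨ (k - l ≤ (j:ℕ) ∧ (i:ℕ) = (j:ℕ) + l)) :
    fwd2 k l hl hlk hkn σ j = σ i := by
  unfold fwd2
  rcases h with ⟨h1, h2⟩ | ⟨h1, h2⟩
  · rw [if_pos h1]; congr 1; exact Fin.ext h2.symm
  · rw [if_neg (by omega)]; congr 1; exact Fin.ext h2.symm

lemma bwd_fwd (σ : Fin n → Bool) :
    bwd k l hl hlk hkn (fwd1 k l hl hlk hkn σ) (fwd2 k l hl hlk hkn σ) = σ := by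
  funext i
  have hi := i.isLt
  unfold bwd fwd1 fwd2
  by_cases h1 : (i:ℕ) < k - l
  · simp only [h1, dif_pos, if_pos]
  · by_cases h2 : (i:ℕ) < k
    · simp only [h1, h2, dif_neg, dif_pos, not_false_iff]
      congr 1; apply Fin.ext; show k - 1 - (k - 1 - (i:ℕ)) = (i:ℕ); omega
    · simp only [h1, h2, dif_neg, not_false_iff]
      have h3 : ¬ ((i:ℕ) - l < k - l) := by omega
      rw [if_neg h3]
      congr 1; apply Fin.ext; show (i:ℕ) - l + l = (i:ℕ); omega

lemma fwd1_bwd (τ : Fin l → Bool) (ρ : Fin (n - l) → Bool) :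
    fwd1 k l hl hlk hkn (bwd k l hl hlk hkn τ ρ) = τ := by
  funext t
  have ht := t.isLt
  unfold bwd fwd1
  have h1 : ¬ (k - 1 - (t:ℕ) < k - l) := by omega
  have h2 : k - 1 - (t:ℕ) < k := by omega
  simp only [h1, h2, dif_neg, dif_pos, not_false_iff]
  congr 1; apply Fin.ext; show k - 1 - (k - 1 - (t:ℕ)) = (t:ℕ); omega

lemma fwd2_bwd (τ : Fin l → Bool) (ρ : Fin (n - l) → Bool) :
    fwd2 k l hl hlk hkn (bwd k l hl hlk hkn τ ρ) = ρ := by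
  funext j
  have hj := j.isLt
  unfold bwd fwd2
  by_cases h1 : (j:ℕ) < k - l
  · simp only [h1, if_pos, dif_pos]
  · have h2 : ¬ ((j:ℕ) + l < k - l) := by omega
    have h3 : ¬ ((j:ℕ) + l < k) := by omega
    simp only [h1, h2, h3, if_neg, dif_neg, not_false_iff]
    congr 1; apply Fin.ext; show (j:ℕ) + l - l = (j:ℕ); omega

lemma tau_pos (σ : Fin n → Bool) {t : ℕ} (ht : t ≤ l) :
    srwPos l (fwd1 k l hl hlk hkn σ) t = seg n σ (k - t) k := by
  unfold srwPos seg
  refine Finset.sum_bij'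
    (fun (s : Fin l) (hs : s ∈ univ.filter (fun s : Fin l => (s:ℕ) < t)) =>
      (⟨k - 1 - (s:ℕ), by have := s.isLt; omega⟩ : Fin n))
    (fun (a : Fin n) (ha : a ∈ univ.filter (fun i : Fin n => k - t ≤ (i:ℕ) ∧ (i:ℕ) < k)) =>
      (⟨k - 1 - (a:ℕ), by
        have := (Finset.mem_filter.mp ha).2; omega⟩ : Fin l))
    ?_ ?_ ?_ ?_ ?_
  · intro s hs
    have hs' := (Finset.mem_filter.mp hs).2
    simp only [Finset.mem_filter, Finset.mem_univ, true_and]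
    constructor <;> omega
  · intro a ha
    have ha' := (Finset.mem_filter.mp ha).2
    simp only [Finset.mem_filter, Finset.mem_univ, true_and]
    omega
  · intro s hs
    have hs' := (Finset.mem_filter.mp hs).2
    apply Fin.ext; show k - 1 - (k - 1 - (s:ℕ)) = (s:ℕ)
    have := s.isLt; omega
  · intro a ha
    have ha' := (Finset.mem_filter.mp ha).2
    apply Fin.ext; show k - 1 - (k - 1 - (a:ℕ)) = (a:ℕ); omega
  · intro s hs; rfl

lemma rho_pos_le (σ : Fin n → Bool) {m : ℕ} (hm : m ≤ k - l) :
    srwPos (n - l) (fwd2 k l hl hlk hkn σ) m = srwPos n σ m := by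
  unfold srwPos
  refine Finset.sum_bij'
    (fun (j : Fin (n - l)) (hj : j ∈ univ.filter (fun j : Fin (n - l) => (j:ℕ) < m)) =>
      (⟨(j:ℕ), by have := j.isLt; omega⟩ : Fin n))
    (fun (a : Fin n) (ha : a ∈ univ.filter (fun i : Fin n => (i:ℕ) < m)) =>
      (⟨(a:ℕ), by have := (Finset.mem_filter.mp ha).2; omega⟩ : Fin (n - l)))
    ?_ ?_ ?_ ?_ ?_
  · intro j hj
    have hj' := (Finset.mem_filter.mp hj).2
    simp only [Finset.mem_filter, Finset.mem_univ, true_and]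
    exact hj'
  · intro a ha
    have ha' := (Finset.mem_filter.mp ha).2
    simp only [Finset.mem_filter, Finset.mem_univ, true_and]
    exact ha'
  · intro j hj; apply Fin.ext; rfl
  · intro a ha; apply Fin.ext; rfl
  · intro j hj
    have hj' := (Finset.mem_filter.mp hj).2
    unfold fwd2
    have : (j:ℕ) < k - l := by omega
    simp only [this, if_pos]

lemma rho_total (σ : Fin n → Bool) :
    srwPos (n - l) (fwd2 k l hl hlk hkn σ) (n - l)
      = srwPos n σ n - seg n σ (k - l) k := by
  have key : srwPos n σ n
      = srwPos (n - l) (fwd2 k l hl hlk hkn σ) (n - l) + seg n σ (k - l) k := by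
    unfold srwPos seg
    rw [← Finset.sum_filter_add_sum_filter_not
        (univ.filter fun i : Fin n => (i:ℕ) < n) (fun i => ¬ (k - l ≤ (i:ℕ) ∧ (i:ℕ) < k))]
    congr 1
    · refine Finset.sum_bij'
        (fun (a : Fin n) (ha : a ∈ (univ.filter fun i : Fin n => (i:ℕ) < n).filter
            (fun i : Fin n => ¬ (k - l ≤ (i:ℕ) ∧ (i:ℕ) < k))) =>
          (⟨if (a:ℕ) < k - l then (a:ℕ) else (a:ℕ) - l, by
            have h := (Finset.mem_filter.mp ha).2
            have := a.isLt; split <;> omega⟩ : Fin (n - l)))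
        (fun (j : Fin (n - l)) (hj : j ∈ univ.filter (fun j : Fin (n - l) => (j:ℕ) < n - l)) =>
          (⟨if (j:ℕ) < k - l then (j:ℕ) else (j:ℕ) + l, by
            have := j.isLt; split <;> omega⟩ : Fin n))
        ?_ ?_ ?_ ?_ ?_
      · intro a ha
        have h := (Finset.mem_filter.mp ha).2
        have := a.isLt
        simp only [Finset.mem_filter, Finset.mem_univ, true_and]
        push_neg at h
        split <;> omega
      · intro j hj
        have := j.isLt
        simp only [Finset.mem_filter, Finset.mem_univ, true_and]
        constructor
        · split <;> omega
        · split <;> omega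
      · intro a ha
        have h := (Finset.mem_filter.mp ha).2
        push_neg at h
        have := a.isLt
        apply Fin.ext
        show (if (if (a:ℕ) < k - l then (a:ℕ) else (a:ℕ) - l) < k - l
              then (if (a:ℕ) < k - l then (a:ℕ) else (a:ℕ) - l)
              else (if (a:ℕ) < k - l then (a:ℕ) else (a:ℕ) - l) + l) = (a:ℕ)
        by_cases hc : (a:ℕ) < k - l
        · simp only [if_pos hc]
        · have hc2 : ¬ ((a:ℕ) - l < k - l) := by omega
          simp only [if_neg hc, if_neg hc2]
          omega
      · intro j hj
        have := j.isLt
        apply Fin.ext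
        show (if (if (j:ℕ) < k - l then (j:ℕ) else (j:ℕ) + l) < k - l
              then (if (j:ℕ) < k - l then (j:ℕ) else (j:ℕ) + l)
              else (if (j:ℕ) < k - l then (j:ℕ) else (j:ℕ) + l) - l) = (j:ℕ)
        by_cases hc : (j:ℕ) < k - l
        · simp only [if_pos hc]
        · have hc2 : ¬ ((j:ℕ) + l < k - l) := by omega
          simp only [if_neg hc, if_neg hc2]
          omega
      · intro a ha
        have h := (Finset.mem_filter.mp ha).2
        push_neg at h
        have := a.isLt
        refine congrArg srwStep (fwd2_eq k l hl hlk hkn σ _ a ?_).symm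
        show ((if (a:ℕ) < k - l then (a:ℕ) else (a:ℕ) - l) < k - l
              ∧ (a:ℕ) = (if (a:ℕ) < k - l then (a:ℕ) else (a:ℕ) - l))
          ∨ (k - l ≤ (if (a:ℕ) < k - l then (a:ℕ) else (a:ℕ) - l)
              ∧ (a:ℕ) = (if (a:ℕ) < k - l then (a:ℕ) else (a:ℕ) - l) + l)
        by_cases hc : (a:ℕ) < k - l
        · simp only [if_pos hc]; exact Or.inl ⟨hc, trivial⟩
        · simp only [if_neg hc]; right; omega
    · apply Finset.sum_congr _ (fun _ _ => rfl)
      rw [Finset.filter_filter]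
      apply Finset.filter_congr; intro i _; have := i.isLt; simp <;> omega
  linarith [key]

lemma key_iff (σ : Fin n → Bool) (x : ℤ) :
    (srwPos n σ n = x ∧ srwPos n σ (k - l) = srwPos n σ k ∧
        ∀ m ∈ Finset.Ioo (k - l) k, srwPos n σ m ≠ srwPos n σ k)
      ↔ ((∀ j ∈ Finset.Ioo 0 l, srwPos l (fwd1 k l hl hlk hkn σ) j ≠ 0) ∧
            srwPos l (fwd1 k l hl hlk hkn σ) l = 0) ∧
          srwPos (n - l) (fwd2 k l hl hlk hkn σ) (n - l) = x := by
  have hA : srwPos l (fwd1 k l hl hlk hkn σ) l = seg n σ (k - l) k :=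
    tau_pos k l hl hlk hkn σ le_rfl
  have hB : srwPos n σ k = srwPos n σ (k - l) + seg n σ (k - l) k :=
    pos_split σ (by omega)
  have hD : srwPos (n - l) (fwd2 k l hl hlk hkn σ) (n - l)
      = srwPos n σ n - seg n σ (k - l) k := rho_total k l hl hlk hkn σ
  have hC : ∀ m ∈ Finset.Ioo (k - l) k,
      srwPos n σ k = srwPos n σ m + srwPos l (fwd1 k l hl hlk hkn σ) (k - m) := by
    intro m hm
    rw [Finset.mem_Ioo] at hm
    have h1 : srwPos l (fwd1 k l hl hlk hkn σ) (k - m) = seg n σ (k - (k - m)) k :=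
      tau_pos k l hl hlk hkn σ (by omega)
    have h2 : k - (k - m) = m := by omega
    rw [h1, h2]
    exact pos_split σ (by omega)
  constructor
  · rintro ⟨h1, h2, h3⟩
    have seg0 : seg n σ (k - l) k = 0 := by omega
    refine ⟨⟨?_, by omega⟩, by omega⟩
    intro j hj
    rw [Finset.mem_Ioo] at hj
    have hm : k - j ∈ Finset.Ioo (k - l) k := by rw [Finset.mem_Ioo]; omega
    have := hC (k - j) hm
    have hkj : k - (k - j) = j := by omega
    rw [hkj] at this
    have := h3 (k - j) hm
    omega
  · rintro ⟨⟨ret1, ret2⟩, hρ⟩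
    have seg0 : seg n σ (k - l) k = 0 := by omega
    refine ⟨by omega, by omega, ?_⟩
    intro m hm
    have h1 := hC m hm
    rw [Finset.mem_Ioo] at hm
    have hj : k - m ∈ Finset.Ioo 0 l := by rw [Finset.mem_Ioo]; omega
    have := ret1 (k - m) hj
    omega

open Classical in
include hl hlk hkn in
lemma cardB (x : ℤ) :
    ((univ : Finset (Fin n → Bool)).filter (fun σ =>
        srwPos n σ n = x ∧ srwPos n σ (k - l) = srwPos n σ k ∧
          ∀ m ∈ Finset.Ioo (k - l) k, srwPos n σ m ≠ srwPos n σ k)).card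
      = ((univ : Finset (Fin l → Bool)).filter (fun τ =>
            (∀ j ∈ Finset.Ioo 0 l, srwPos l τ j ≠ 0) ∧ srwPos l τ l = 0)).card
        * ((univ : Finset (Fin (n - l) → Bool)).filter (fun ρ =>
            srwPos (n - l) ρ (n - l) = x)).card := by
  rw [← Finset.card_product]
  refine Finset.card_nbij'
    (fun σ => (fwd1 k l hl hlk hkn σ, fwd2 k l hl hlk hkn σ))
    (fun p => bwd k l hl hlk hkn p.1 p.2) ?_ ?_ ?_ ?_
  · intro σ hσ
    rw [Finset.mem_coe, Finset.mem_filter] at hσ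
    have h2 := (key_iff k l hl hlk hkn σ x).mp hσ.2
    simp only [Finset.mem_coe, Finset.mem_product, Finset.mem_filter, Finset.mem_univ, true_and]
    exact ⟨h2.1, h2.2⟩
  · intro p hp
    simp only [Finset.mem_coe, Finset.mem_product, Finset.mem_filter, Finset.mem_univ, true_and] at hp
    rw [Finset.mem_coe, Finset.mem_filter]
    refine ⟨Finset.mem_univ _, (key_iff k l hl hlk hkn _ x).mpr ?_⟩
    rw [fwd1_bwd, fwd2_bwd]
    exact ⟨hp.1, hp.2⟩
  · intro σ hσ; exact bwd_fwd k l hl hlk hkn σ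
  · intro p hp
    exact Prod.ext (fwd1_bwd k l hl hlk hkn p.1 p.2) (fwd2_bwd k l hl hlk hkn p.1 p.2)

end split
end SRW

namespace SRW
variable {n : ℕ}

open Classical in
lemma rangeCard_eq (σ : Fin n → Bool) :
    srwRangeCard n σ = ((Finset.range (n + 1)).filter
      (fun kk => ∀ j < kk, srwPos n σ j ≠ srwPos n σ kk)).card := by
  classical
  unfold srwRangeCard
  refine (Finset.card_bij (fun kk _ => srwPos n σ kk) ?_ ?_ ?_).symm
  · intro kk hkk
    rw [Finset.mem_filter] at hkk
    exact Finset.mem_image_of_mem _ hkk.1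
  · intro k1 h1 k2 h2 heq
    rw [Finset.mem_filter] at h1 h2
    by_contra hne
    rcases Nat.lt_or_ge k1 k2 with h | h
    · exact h2.2 k1 h heq
    · exact h1.2 k2 (by omega) heq.symm
  · intro v hv
    rw [Finset.mem_image] at hv
    obtain ⟨j, hj, hjv⟩ := hv
    have hex : ∃ m, srwPos n σ m = v := ⟨j, hjv⟩
    refine ⟨Nat.find hex, ?_, Nat.find_spec hex⟩
    rw [Finset.mem_filter]
    constructor
    · rw [Finset.mem_range] at hj ⊢
      have := Nat.find_min' hex hjv
      omega
    · intro j' hj' hne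
      exact Nat.find_min hex hj' (hne.trans (Nat.find_spec hex))

open Classical in
lemma notfresh_decomp (x : ℤ) (kk : ℕ) (hkk : kk ≤ n) :
    ((univ : Finset (Fin n → Bool)).filter (fun σ =>
        srwPos n σ n = x ∧ ∃ j < kk, srwPos n σ j = srwPos n σ kk)).card
      = ∑ l ∈ Finset.Icc 1 kk,
          ((univ : Finset (Fin n → Bool)).filter (fun σ =>
            srwPos n σ n = x ∧ srwPos n σ (kk - l) = srwPos n σ kk ∧
              ∀ m ∈ Finset.Ioo (kk - l) kk, srwPos n σ m ≠ srwPos n σ kk)).card := by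
  classical
  rw [← Finset.card_biUnion]
  · congr 1
    ext σ
    simp only [Finset.mem_biUnion, Finset.mem_filter, Finset.mem_univ, true_and,
      Finset.mem_Icc]
    constructor
    · rintro ⟨hend, j, hj, hjeq⟩
      set P : ℕ → Prop := fun m => srwPos n σ m = srwPos n σ kk with hP
      have hPj : P j := hjeq
      have hjb : j ≤ kk - 1 := by omega
      have hspec : P (Nat.findGreatest P (kk - 1)) := Nat.findGreatest_spec hjb hPj
      set j0 := Nat.findGreatest P (kk - 1) with hj0def
      have hj0 : j0 ≤ kk - 1 := Nat.findGreatest_le _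
      have hidx : kk - (kk - j0) = j0 := by omega
      refine ⟨kk - j0, ⟨by omega, by omega⟩, hend, ?_, ?_⟩
      · rw [hidx]; exact hspec
      · intro m hm
        rw [hidx, Finset.mem_Ioo] at hm
        intro hcon
        exact Nat.findGreatest_is_greatest hm.1 (by omega) hcon
    · rintro ⟨l, ⟨hl1, hl2⟩, hend, heq, _⟩
      exact ⟨hend, kk - l, by omega, heq⟩
  · intro l1 h1 l2 h2 hne
    rw [Finset.mem_coe, Finset.mem_Icc] at h1 h2
    unfold Function.onFun
    have key : ∀ l1 l2 : ℕ, 1 ≤ l1 → l1 < l2 → l2 ≤ kk →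
        ∀ σ : Fin n → Bool,
          σ ∈ (univ : Finset (Fin n → Bool)).filter (fun σ =>
            srwPos n σ n = x ∧ srwPos n σ (kk - l1) = srwPos n σ kk ∧
              ∀ m ∈ Finset.Ioo (kk - l1) kk, srwPos n σ m ≠ srwPos n σ kk) →
          σ ∉ (univ : Finset (Fin n → Bool)).filter (fun σ =>
            srwPos n σ n = x ∧ srwPos n σ (kk - l2) = srwPos n σ kk ∧
              ∀ m ∈ Finset.Ioo (kk - l2) kk, srwPos n σ m ≠ srwPos n σ kk) := by
      intro a b ha hab hbk σ hσ1 hσ2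
      rw [Finset.mem_filter] at hσ1 hσ2
      have h1 := hσ1.2.2.1
      have h2 := hσ2.2.2.2 (kk - a) (by rw [Finset.mem_Ioo]; omega)
      exact h2 h1
    rcases Nat.lt_or_ge l1 l2 with h | h
    · rw [Finset.disjoint_left]
      intro σ hσ1 hσ2
      exact key l1 l2 h1.1 h h2.2 σ hσ1 hσ2
    · rw [Finset.disjoint_right]
      intro σ hσ2 hσ1
      exact key l2 l1 h2.1 (by omega) h1.2 σ hσ2 hσ1

lemma double_count (f : ℕ → ℕ) :
    ∑ kk ∈ Finset.range (n + 1), ∑ l ∈ Finset.Icc 1 kk, f l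
      = ∑ l ∈ Finset.Icc 1 n, (n + 1 - l) * f l := by
  have h1 : ∀ kk ∈ Finset.range (n + 1), ∑ l ∈ Finset.Icc 1 kk, f l
      = ∑ l ∈ Finset.Icc 1 n, ite (l ≤ kk) (f l) 0 := by
    intro kk hkk
    rw [Finset.mem_range] at hkk
    rw [← Finset.sum_filter]
    congr 1
    ext l
    simp only [Finset.mem_filter, Finset.mem_Icc]
    omega
  rw [Finset.sum_congr rfl h1, Finset.sum_comm]
  refine Finset.sum_congr rfl ?_
  intro l hl
  rw [Finset.mem_Icc] at hl
  rw [← Finset.sum_filter]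
  have : (Finset.range (n + 1)).filter (fun kk => l ≤ kk) = Finset.Ico l (n + 1) := by
    ext kk; simp only [Finset.mem_filter, Finset.mem_range, Finset.mem_Ico]; omega
  rw [this, Finset.sum_const, Nat.card_Ico, smul_eq_mul]

open Classical in
lemma main_count (x : ℤ) :
    (∑ σ ∈ (univ : Finset (Fin n → Bool)).filter (fun σ => srwPos n σ n = x),
        srwRangeCard n σ)
      + ∑ l ∈ Finset.Icc 1 n,
          (n + 1 - l) *
            (((univ : Finset (Fin l → Bool)).filter (fun τ =>
              (∀ j ∈ Finset.Ioo 0 l, srwPos l τ j ≠ 0) ∧ srwPos l τ l = 0)).card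
              * srwEndCount (n - l) x)
      = (n + 1) * srwEndCount n x := by
  classical
  set Ex := (univ : Finset (Fin n → Bool)).filter (fun σ => srwPos n σ n = x) with hEx
  have step1 : (∑ σ ∈ Ex, srwRangeCard n σ)
      = ∑ kk ∈ Finset.range (n + 1),
          (Ex.filter (fun σ => ∀ j < kk, srwPos n σ j ≠ srwPos n σ kk)).card := by
    have h : ∀ σ ∈ Ex, srwRangeCard n σ = ∑ kk ∈ Finset.range (n + 1),
        ite (∀ j < kk, srwPos n σ j ≠ srwPos n σ kk) 1 0 := by
      intro σ _
      rw [rangeCard_eq]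
      exact Finset.card_filter _ _
    rw [Finset.sum_congr rfl h, Finset.sum_comm]
    exact Finset.sum_congr rfl (fun kk _ => (Finset.card_filter _ _).symm)
  have hnf : ∀ kk, kk ≤ n →
      (Ex.filter (fun σ => ¬ ∀ j < kk, srwPos n σ j ≠ srwPos n σ kk)).card
        = ∑ l ∈ Finset.Icc 1 kk,
            ((univ : Finset (Fin l → Bool)).filter (fun τ =>
              (∀ j ∈ Finset.Ioo 0 l, srwPos l τ j ≠ 0) ∧ srwPos l τ l = 0)).card
              * srwEndCount (n - l) x := by
    intro kk hkk
    have e1 : Ex.filter (fun σ => ¬ ∀ j < kk, srwPos n σ j ≠ srwPos n σ kk)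
        = (univ : Finset (Fin n → Bool)).filter (fun σ =>
            srwPos n σ n = x ∧ ∃ j < kk, srwPos n σ j = srwPos n σ kk) := by
      rw [hEx, Finset.filter_filter]
      apply Finset.filter_congr
      intro σ _
      constructor
      · rintro ⟨h1, h2⟩
        push_neg at h2
        exact ⟨h1, h2⟩
      · rintro ⟨h1, h2⟩
        refine ⟨h1, ?_⟩
        push_neg
        exact h2
    rw [e1, notfresh_decomp x kk hkk]
    refine Finset.sum_congr rfl (fun l hl => ?_)
    rw [Finset.mem_Icc] at hl
    exact cardB kk l hl.1 hl.2 hkk x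
  rw [step1, ← double_count]
  rw [← Finset.sum_add_distrib]
  have hfin : ∀ kk ∈ Finset.range (n + 1),
      ((Ex.filter (fun σ => ∀ j < kk, srwPos n σ j ≠ srwPos n σ kk)).card
        + ∑ l ∈ Finset.Icc 1 kk,
            ((univ : Finset (Fin l → Bool)).filter (fun τ =>
              (∀ j ∈ Finset.Ioo 0 l, srwPos l τ j ≠ 0) ∧ srwPos l τ l = 0)).card
              * srwEndCount (n - l) x)
      = srwEndCount n x := by
    intro kk hkk
    rw [Finset.mem_range] at hkk
    rw [← hnf kk (by omega)]
    rw [Finset.card_filter_add_card_filter_not]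
    rw [hEx, srwEndCount]
  rw [Finset.sum_congr rfl hfin, Finset.sum_const, Finset.card_range, smul_eq_mul]

end SRW

/-- For the simple random walk on `ℤ` conditioned on `X_n = x`,
`E_{0,x}^{(n)}(|X_{[0,n]}|) = n + 1 − ∑_{l=1}^n (n−l+1) q_l p_{n−l}(x)/p_n(x)`. -/
theorem conditioned_range_expectation (n : ℕ) (hn : 1 ≤ n) (x : ℤ)
    (hx : 0 < srwEndCount n x) :
    (∑ σ ∈ Finset.univ.filter (fun σ : Fin n → Bool => srwPos n σ n = x),
        (srwRangeCard n σ : ℝ)) / (srwEndCount n x : ℝ)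
      = (n : ℝ) + 1 - ∑ l ∈ Finset.Icc 1 n,
          ((n : ℝ) - (l : ℝ) + 1) * srwFirstReturn l * (srwProb (n - l) x / srwProb n x) := by
  classical
  have hC : (0:ℝ) < (srwEndCount n x : ℝ) := by exact_mod_cast hx
  have hCne : (srwEndCount n x : ℝ) ≠ 0 := ne_of_gt hC
  have hmain := SRW.main_count (n := n) x
  have key : ∀ l ∈ Finset.Icc 1 n,
      ((n : ℝ) - (l : ℝ) + 1) * srwFirstReturn l * (srwProb (n - l) x / srwProb n x)
        = (((n + 1 - l) *
            (((Finset.univ.filter (fun τ : Fin l → Bool =>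
              (∀ j ∈ Finset.Ioo 0 l, srwPos l τ j ≠ 0) ∧ srwPos l τ l = 0)).card)
              * srwEndCount (n - l) x) : ℕ) : ℝ) / (srwEndCount n x : ℝ) := by
    intro l hl
    rw [Finset.mem_Icc] at hl
    rw [srwFirstReturn, srwProb, srwProb]
    have h2 : (2:ℝ) ^ l * (2:ℝ) ^ (n - l) = 2 ^ n := by
      rw [← pow_add]; congr 1; omega
    have hcast : ((n + 1 - l : ℕ) : ℝ) = (n : ℝ) - (l : ℝ) + 1 := by
      have := hl.2; push_cast [Nat.cast_sub (by omega : l ≤ n + 1)]; ring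
    push_cast [hcast]
    have h2l : (2:ℝ) ^ l ≠ 0 := by positivity
    have h2nl : (2:ℝ) ^ (n - l) ≠ 0 := by positivity
    have h2n : (2:ℝ) ^ n ≠ 0 := by positivity
    field_simp
    ring_nf
    rw [← h2]
    ring
  rw [Finset.sum_congr rfl key, ← Finset.sum_div, ← Nat.cast_sum, ← Nat.cast_sum]
  rw [eq_sub_iff_add_eq, ← add_div, div_eq_iff hCne]
  have : ((∑ σ ∈ Finset.univ.filter (fun σ : Fin n → Bool => srwPos n σ n = x),
        srwRangeCard n σ)
      + ∑ l ∈ Finset.Icc 1 n, (n + 1 - l) *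
          (((Finset.univ.filter (fun τ : Fin l → Bool =>
            (∀ j ∈ Finset.Ioo 0 l, srwPos l τ j ≠ 0) ∧ srwPos l τ l = 0)).card)
            * srwEndCount (n - l) x) : ℕ)
      = ((n : ℕ) + 1) * srwEndCount n x := hmain
  exact_mod_cast this
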